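/- arXiv:math/0501437 — 4 statements merged into one kernel-verified Lean document; each statement's English description precedes it below -/
import Mathlib

section
/- Let M be a conical refinement monoid. Then Ind_M(n·x) = n · Ind_M(x) for all x ∈ M and all positive integers n, and Ind_M(x) = 0 if and only if x = 0. -/
/-- The refinement property for a commutative monoid. -/
def HasRefinement (M : Type*) [AddCommMonoid M] : Prop :=
  ∀ a₀ a₁ b₀ b₁ : M, a₀ + a₁ = b₀ + b₁ →
    ∃ c₀₀ c₀₁ c₁₀ c₁₁ : M,
      a₀ = c₀₀ + c₀₁ ∧ a₁ = c₁₀ + c₁₁ ∧ b₀ = c₀₀ + c₁₀ ∧ b₁ = c₀₁ + c₁₁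

/-- A commutative monoid is conical if `x + y = 0` implies `x = y = 0`. -/
def Conical (M : Type*) [AddCommMonoid M] : Prop :=
  ∀ x y : M, x + y = 0 → x = 0 ∧ y = 0

/-- The algebraic preordering on a commutative monoid: `x ≤ y` iff `∃ z, x + z = y`. -/
def algLE {M : Type*} [AddCommMonoid M] (x y : M) : Prop := ∃ z, x + z = y

/-- The index of an element `x`: the supremum in `ℕ∞` of all `n` such that `n • y ≤ x`
for some nonzero `y`. -/
noncomputable def indexM {M : Type*} [AddCommMonoid M] (x : M) : ℕ∞ :=
  sSup ((fun n : ℕ => (n : ℕ∞)) '' {n : ℕ | ∃ y : M, y ≠ 0 ∧ algLE (n • y) x})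

section Aux

open Finset

variable {M : Type*} [AddCommMonoid M]

lemma algLE_trans {a b c : M} (h1 : algLE a b) (h2 : algLE b c) : algLE a c := by
  obtain ⟨z1, rfl⟩ := h1; obtain ⟨z2, rfl⟩ := h2; exact ⟨z1 + z2, (add_assoc _ _ _).symm⟩

lemma algLE_nsmul (n : ℕ) {a b : M} (h : algLE a b) : algLE (n • a) (n • b) := by
  obtain ⟨z, rfl⟩ := h; exact ⟨n • z, (smul_add n a z).symm⟩

lemma conical_sum_zero (hc : Conical M) :
    ∀ {k : ℕ} (f : Fin k → M), ∑ i, f i = 0 → ∀ i, f i = 0 := by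
  intro k
  induction k with
  | zero => intro f _ i; exact i.elim0
  | succ k ih =>
    intro f h i
    rw [Fin.sum_univ_succ] at h
    obtain ⟨h0, hrest⟩ := hc _ _ h
    refine Fin.cases h0 (fun j => ih _ hrest j) i

/-- splitting: if u + v = ∑ b j then b splits accordingly. -/
lemma split_lemma (hc : Conical M) (hr : HasRefinement M) :
    ∀ (q : ℕ) (u v : M) (b : Fin q → M), u + v = ∑ j, b j →
      ∃ r s : Fin q → M, (∀ j, b j = r j + s j) ∧ u = ∑ j, r j ∧ v = ∑ j, s j := by
  intro q
  induction q with
  | zero =>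
    intro u v b h
    simp only [Finset.univ_eq_empty, Finset.sum_empty] at h
    obtain ⟨hu, hv⟩ := hc _ _ h
    exact ⟨Fin.elim0, Fin.elim0, fun j => j.elim0, by simp [hu], by simp [hv]⟩
  | succ q ih =>
    intro u v b h
    rw [Fin.sum_univ_succ] at h
    obtain ⟨c00, c01, c10, c11, hu, hv, hb0, hrest⟩ := hr u v (b 0) (∑ j : Fin q, b j.succ) h
    obtain ⟨r', s', hbj, hc01, hc11⟩ := ih c01 c11 (fun j => b j.succ) hrest.symm
    refine ⟨Fin.cons c00 r', Fin.cons c10 s', ?_, ?_, ?_⟩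
    · refine Fin.cases ?_ ?_
      · simpa using hb0
      · intro j; simpa using hbj j
    · rw [Fin.sum_univ_succ]; simpa [hc01] using hu
    · rw [Fin.sum_univ_succ]; simpa [hc11] using hv

/-- general finite refinement -/
lemma gen_refine (hc : Conical M) (hr : HasRefinement M) :
    ∀ (p : ℕ) {q : ℕ} (a : Fin p → M) (b : Fin q → M), ∑ i, a i = ∑ j, b j →
      ∃ c : Fin p → Fin q → M, (∀ i, a i = ∑ j, c i j) ∧ (∀ j, b j = ∑ i, c i j) := by
  intro p
  induction p with
  | zero =>
    intro q a b h
    simp only [Finset.univ_eq_empty, Finset.sum_empty] at h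
    have := conical_sum_zero hc b h.symm
    exact ⟨Fin.elim0, fun i => i.elim0, fun j => by simp [this j]⟩
  | succ p ih =>
    intro q a b h
    rw [Fin.sum_univ_succ] at h
    obtain ⟨r, s, hbj, hr0, hrs⟩ := split_lemma hc hr q (a 0) (∑ i : Fin p, a i.succ) b h
    obtain ⟨c', hrow, hcol⟩ := ih (fun i => a i.succ) s hrs
    refine ⟨Fin.cons r c', ?_, ?_⟩
    · refine Fin.cases ?_ ?_
      · simpa using hr0
      · intro i; simpa using hrow i
    · intro j
      rw [Fin.sum_univ_succ]
      simpa [← hcol j] using hbj j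

/-- From m•y ≤ n•x get a matrix decomposition: rows sum to y, column sums ≤ x. -/
lemma row_decomp (hc : Conical M) (hr : HasRefinement M) (m n : ℕ) (y x : M)
    (h : algLE (m • y) (n • x)) :
    ∃ c : Fin m → Fin n → M, (∀ i, ∑ j, c i j = y) ∧ (∀ j, algLE (∑ i, c i j) x) := by
  obtain ⟨w, hw⟩ := h
  have hsum : ∑ i : Fin (m+1), (Fin.cons w (fun _ => y) : Fin (m+1) → M) i
      = ∑ _j : Fin n, x := by
    rw [Fin.sum_univ_succ]
    simp only [Fin.cons_zero, Fin.cons_succ]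
    rw [Finset.sum_const, Finset.sum_const]
    simp only [Finset.card_univ, Fintype.card_fin]
    rw [← hw]; exact add_comm w (m • y)
  obtain ⟨c, hrow, hcol⟩ := gen_refine hc hr (m+1) _ _ hsum
  refine ⟨fun i j => c i.succ j, fun i => ?_, fun j => ?_⟩
  · have := hrow i.succ
    simpa using this.symm
  · have := hcol j
    rw [Fin.sum_univ_succ] at this
    exact ⟨c 0 j, by rw [add_comm, ← this]⟩

/-- common refinement of m decompositions of y into n parts -/
lemma common_refine (hc : Conical M) (hr : HasRefinement M) (n : ℕ) :
    ∀ (m : ℕ) (y : M) (c : Fin m → Fin n → M), (∀ i, ∑ j, c i j = y) →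
      ∃ (k : ℕ) (d : Fin k → M) (N : Fin k → Fin n → ℕ),
        (∑ t, d t = y) ∧ (∀ t, ∑ j, N t j = m) ∧
        (∀ j, ∑ t, N t j • d t = ∑ i, c i j) := by
  intro m
  induction m with
  | zero =>
    intro y c _
    exact ⟨1, fun _ => y, fun _ _ => 0, by simp, by simp, by simp⟩
  | succ m ih =>
    intro y c hrows
    obtain ⟨k, d, N, hd, hN, hcols⟩ := ih y (fun i => c i.castSucc)
      (fun i => hrows i.castSucc)
    have hlast : ∑ t, d t = ∑ j, c (Fin.last m) j := by rw [hd, hrows]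
    obtain ⟨e, he1, he2⟩ := gen_refine hc hr k d (c (Fin.last m)) hlast
    set E := (finProdFinEquiv : Fin k × Fin n ≃ Fin (k * n))
    refine ⟨k * n, fun u => e (E.symm u).1 (E.symm u).2,
      fun u j' => N (E.symm u).1 j' + (if (E.symm u).2 = j' then 1 else 0), ?_, ?_, ?_⟩
    · rw [Fintype.sum_equiv E.symm _ (fun p : Fin k × Fin n => e p.1 p.2) (fun u => rfl)]
      rw [Fintype.sum_prod_type]
      simp only [← he1]
      exact hd
    · intro u
      rw [Finset.sum_add_distrib, hN]
      simp [Finset.sum_ite_eq]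
    · intro j'
      rw [Fintype.sum_equiv E.symm _
        (fun p : Fin k × Fin n => (N p.1 j' + (if p.2 = j' then 1 else 0)) • e p.1 p.2)
        (fun u => rfl)]
      rw [Fintype.sum_prod_type]
      have hsplit : ∀ t : Fin k, ∑ j : Fin n, (N t j' + (if j = j' then 1 else 0)) • e t j
          = N t j' • d t + e t j' := by
        intro t
        have : ∀ j : Fin n, (N t j' + (if j = j' then 1 else 0)) • e t j
            = N t j' • e t j + (if j = j' then e t j else 0) := by
          intro j
          rw [add_smul]
          congr 1
          split <;> simp
        rw [Finset.sum_congr rfl (fun j _ => this j), Finset.sum_add_distrib,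
          ← Finset.smul_sum, ← he1, Finset.sum_ite_eq' Finset.univ j' (fun j => e t j)]
        simp
      rw [Finset.sum_congr rfl (fun t _ => hsplit t), Finset.sum_add_distrib, hcols j',
        ← he2 j', Fin.sum_univ_castSucc]

/-- Key lemma: if m • y ≤ n • x with y ≠ 0 and n > 0, then there is z ≠ 0 with
q • z ≤ x and m ≤ n * q. -/
lemma key_lemma (hc : Conical M) (hr : HasRefinement M) {m n : ℕ} (hn : 0 < n)
    {x y : M} (hy : y ≠ 0) (h : algLE (m • y) (n • x)) :
    ∃ (z : M) (q : ℕ), z ≠ 0 ∧ m ≤ n * q ∧ algLE (q • z) x := by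
  obtain ⟨c, hrows, hcols⟩ := row_decomp hc hr m n y x h
  obtain ⟨k, d, N, hd, hN, hcs⟩ := common_refine hc hr n m y c hrows
  -- find nonzero piece
  have hex : ∃ t₀, d t₀ ≠ 0 := by
    by_contra hall
    push_neg at hall
    apply hy
    rw [← hd]
    exact Finset.sum_eq_zero (fun t _ => hall t)
  obtain ⟨t₀, ht₀⟩ := hex
  -- pigeonhole: some column gets at least m/n
  have hne : (Finset.univ : Finset (Fin n)).Nonempty := by
    simpa [Finset.univ_nonempty_iff] using Fin.pos_iff_nonempty.mp hn
  obtain ⟨j₀, _, hj₀⟩ := Finset.exists_max_image Finset.univ (fun j => N t₀ j) hne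
  refine ⟨d t₀, N t₀ j₀, ht₀, ?_, ?_⟩
  · calc m = ∑ j, N t₀ j := (hN t₀).symm
      _ ≤ ∑ _j : Fin n, N t₀ j₀ := Finset.sum_le_sum (fun j _ => hj₀ j (Finset.mem_univ j))
      _ = n * N t₀ j₀ := by simp [Finset.sum_const, mul_comm]
  · refine algLE_trans ?_ (hcols j₀)
    rw [← hcs j₀]
    exact ⟨∑ t ∈ Finset.univ.erase t₀, N t j₀ • d t,
      Finset.add_sum_erase Finset.univ (fun t => N t j₀ • d t) (Finset.mem_univ t₀)⟩

lemma mem_index_set {x : M} {m : ℕ} (y : M) (hy : y ≠ 0) (h : algLE (m • y) x) :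
    (m : ℕ∞) ≤ indexM x :=
  le_sSup ⟨m, ⟨y, hy, h⟩, rfl⟩

lemma index_scale_mem {x : M} {m n : ℕ}
    (hm : m ∈ {n : ℕ | ∃ y : M, y ≠ 0 ∧ algLE (n • y) x}) :
    (n * m) ∈ {k : ℕ | ∃ y : M, y ≠ 0 ∧ algLE (k • y) (n • x)} := by
  obtain ⟨y, hy, hle⟩ := hm
  exact ⟨y, hy, by rw [mul_smul]; exact algLE_nsmul n hle⟩

lemma sup_attained {T : Set ℕ} {k : ℕ} (hT : T.Nonempty)
    (h : sSup ((fun n : ℕ => (n : ℕ∞)) '' T) = (k : ℕ∞)) : k ∈ T := by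
  by_contra hk
  have hub : ∀ m ∈ T, m < k := by
    intro m hm
    have : (m : ℕ∞) ≤ (k : ℕ∞) := h ▸ le_sSup ⟨m, hm, rfl⟩
    rcases lt_or_eq_of_le (Nat.cast_le.mp this) with h' | h'
    · exact h'
    · exact absurd (h' ▸ hm) hk
  obtain ⟨m₀, hm₀⟩ := hT
  have hkpos : 0 < k := Nat.pos_of_ne_zero (fun h0 => Nat.not_lt_zero m₀ (h0 ▸ hub m₀ hm₀))
  have : sSup ((fun n : ℕ => (n : ℕ∞)) '' T) ≤ ((k - 1 : ℕ) : ℕ∞) := by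
    apply sSup_le
    rintro a ⟨m, hm, rfl⟩
    exact Nat.cast_le.mpr (Nat.le_sub_one_of_lt (hub m hm))
  rw [h] at this
  have := Nat.cast_le.mp this
  omega

end Aux

theorem stmt7 {M : Type*} [AddCommMonoid M]
    (hc : Conical M) (hr : HasRefinement M) :
    (∀ (x : M) (n : ℕ), 0 < n → indexM (n • x) = (n : ℕ∞) * indexM x) ∧
      (∀ x : M, indexM x = 0 ↔ x = 0) := by
  constructor
  · intro x n hn
    apply le_antisymm
    · -- indexM (n • x) ≤ n * indexM x
      apply sSup_le
      rintro a ⟨m, ⟨y, hy, hle⟩, rfl⟩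
      obtain ⟨z, q, hz, hmq, hqz⟩ := key_lemma hc hr hn hy hle
      calc (m : ℕ∞) ≤ ((n * q : ℕ) : ℕ∞) := Nat.cast_le.mpr hmq
        _ = (n : ℕ∞) * (q : ℕ∞) := by push_cast; ring
        _ ≤ (n : ℕ∞) * indexM x := mul_le_mul_right (mem_index_set z hz hqz) _
    · -- n * indexM x ≤ indexM (n • x)
      set T : Set ℕ := {m : ℕ | ∃ y : M, y ≠ 0 ∧ algLE (m • y) x} with hT
      by_cases hTne : T.Nonempty
      · rcases eq_or_ne (indexM x) ⊤ with htop | hfin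
        · -- indexM x = ⊤: show indexM (n • x) = ⊤
          have : indexM (n • x) = ⊤ := by
            rw [indexM, sSup_eq_top]
            intro b hb
            lift b to ℕ using hb.ne
            have : ∃ a ∈ (fun n : ℕ => (n : ℕ∞)) '' T, (b : ℕ∞) < a := by
              apply (sSup_eq_top.mp htop) b hb
            obtain ⟨a, ⟨m, hm, rfl⟩, hba⟩ := this
            refine ⟨((n * m : ℕ) : ℕ∞), ⟨n * m, index_scale_mem hm, rfl⟩, ?_⟩
            calc (b : ℕ∞) < (m : ℕ∞) := hba
              _ ≤ ((n * m : ℕ) : ℕ∞) := Nat.cast_le.mpr (Nat.le_mul_of_pos_left m hn)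
          rw [this, htop]
          rw [ENat.mul_top (by exact_mod_cast hn.ne')]
        · lift indexM x to ℕ using hfin with k hk
          have hkT : k ∈ T := sup_attained hTne hk.symm
          have : ((n * k : ℕ) : ℕ∞) ≤ indexM (n • x) :=
            le_sSup ⟨n * k, index_scale_mem hkT, rfl⟩
          calc (n : ℕ∞) * (k : ℕ∞) = ((n * k : ℕ) : ℕ∞) := by push_cast; ring
            _ ≤ indexM (n • x) := this
      · rw [Set.not_nonempty_iff_eq_empty] at hTne
        have : indexM x = 0 := by
          rw [indexM, ← hT, hTne]
          simp
        rw [this, mul_zero]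
        exact zero_le
  · intro x
    constructor
    · intro h
      by_contra hx
      have h1 : (1 : ℕ∞) ≤ indexM x :=
        mem_index_set x hx ⟨0, by rw [one_smul, add_zero]⟩
      rw [h] at h1
      exact absurd h1 (by simp)
    · rintro rfl
      apply le_antisymm _ zero_le
      apply sSup_le
      rintro a ⟨m, ⟨y, hy, z, hz⟩, rfl⟩
      have hmy := (hc _ _ hz).1
      cases m with
      | zero => simp
      | succ m =>
        rw [succ_nsmul] at hmy
        exact absurd (hc _ _ hmy).2 hy
end

section
/- Let M be a conical refinement monoid. Then Fin(M), the set of elements of finite index, is cancellative: for all a, b ∈ M and c ∈ Fin(M), a + c = b + c implies a = b. -/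
/-!
Refine `y + v = z + v` as `y = s + t`, `z = s + u`, `v = t + w = u + w`. Then `y = z` follows
from `t = u`, where again `t + w = u + w`, and `m • y + v = m • s + ((m + 1) • t + w)`.
Starting from `a + c = b + c` with `m = 0`, after `n` refinements `n • t` and `n • u` lie below `c`,
and once `n` exceeds the index of `c` this forces `t = u = 0`.
-/

section

variable {M : Type*} [AddCommMonoid M]

theorem algLE.trans {x y z : M}
    (hxy : algLE x y) (hyz : algLE y z) : algLE x z := by
  obtain ⟨a, rfl⟩ := hxy
  obtain ⟨b, rfl⟩ := hyz
  exact ⟨a + b, (add_assoc x a b).symm⟩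

theorem algLE_add_right (x y : M) : algLE x (x + y) :=
  ⟨y, rfl⟩

theorem algLE_refl (x : M) : algLE x x :=
  ⟨0, add_zero x⟩

theorem algLE.of_add_right {x y z : M}
    (h : algLE (x + y) z) : algLE x z :=
  (algLE_add_right x y).trans h

theorem algLE.of_add_left {x y z : M}
    (h : algLE (x + y) z) : algLE y z :=
  (add_comm x y ▸ h).of_add_right

theorem le_indexM {x y : M} {n : ℕ}
    (hy : y ≠ 0) (hle : algLE (n • y) x) : (n : ℕ∞) ≤ indexM x :=
  le_sSup ⟨n, ⟨y, hy, hle⟩, rfl⟩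

theorem eq_zero_of_nsmul_algLE {x y : M} {n : ℕ}
    (hn : indexM x < n) (hle : algLE (n • y) x) : y = 0 := by
  by_contra hy
  exact (le_indexM hy hle).not_gt hn

theorem HasRefinement.exists_of_add_eq_add
    (hr : HasRefinement M) {y z v : M} (h : y + v = z + v) :
    ∃ s t u w : M, y = s + t ∧ z = s + u ∧ v = t + w ∧ v = u + w := by
  obtain ⟨s, t, u, w, hy, hv₁, hz, hv₂⟩ := hr y v z v h
  exact ⟨s, t, u, w, hy, hz, hv₂, hv₁⟩

theorem eq_of_add_eq_add_of_nsmul_add_algLE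
    (hr : HasRefinement M) {c : M} (j : ℕ) :
    ∀ (m : ℕ) {y z v : M}, indexM c < (m + j : ℕ) → y + v = z + v →
      algLE (m • y + v) c → algLE (m • z + v) c → y = z := by
  induction j with
  | zero =>
    intro m y z v hm _ hy hz
    rw [eq_zero_of_nsmul_algLE hm hy.of_add_right, eq_zero_of_nsmul_algLE hm hz.of_add_right]
  | succ j ih =>
    intro m y z v hm hyz hy hz
    obtain ⟨s, t, u, w, rfl, rfl, hvt, hvu⟩ := hr.exists_of_add_eq_add hyz
    have hshift : ∀ r, m • (s + r) + (r + w) = m • s + ((m + 1) • r + w) := fun r => by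
      rw [smul_add, succ_nsmul]; abel
    rw [hvt, hshift] at hy
    rw [hvu, hshift] at hz
    rw [ih (m + 1) (by rwa [Nat.add_right_comm]) (hvt ▸ hvu) hy.of_add_left hz.of_add_left]

end

theorem stmt9_general {M : Type*} [AddCommMonoid M]
    (hr : HasRefinement M) :
    ∀ a b c : M, indexM c < ⊤ → a + c = b + c → a = b := by
  intro a b c hfin heq
  lift indexM c to ℕ using hfin.ne with N hN
  refine eq_of_add_eq_add_of_nsmul_add_algLE hr (c := c) (N + 1) 0 ?_ heq ?_ ?_
  · rw [← hN, zero_add]; exact_mod_cast N.lt_succ_self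
  all_goals simpa only [zero_smul, zero_add] using algLE_refl c

theorem stmt9 {M : Type*} [AddCommMonoid M]
    (hc : Conical M) (hr : HasRefinement M) :
    ∀ a b c : M, indexM c < ⊤ → a + c = b + c → a = b :=
  stmt9_general hr
end

section
/- Let L be a modular lattice. Then for all a, b, c ∈ L with a ≥ b, the following equality holds in D(L): Δ(b, a) = Δ(b∧c, a∧c) + Δ(b∨c, a∨c). -/
/-- The defining relations of the dimension monoid of a lattice `L`, stated on the free
commutative monoid `Multiset (L × L)`: (D0) `Δ(a,a) = 0`; (D1) `Δ(a,c) = Δ(a,b) + Δ(b,c)`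
whenever `a ≤ b ≤ c`; (D2) `Δ(a, a ⊔ b) = Δ(a ⊓ b, b)`. -/
inductive DimRel (L : Type*) [Lattice L] : Multiset (L × L) → Multiset (L × L) → Prop
  | d0 (a : L) : DimRel L {(a, a)} 0
  | d1 (a b c : L) : a ≤ b → b ≤ c → DimRel L {(a, c)} ({(a, b)} + {(b, c)})
  | d2 (a b : L) : DimRel L {(a, a ⊔ b)} {(a ⊓ b, b)}

/-- The dimension monoid `D(L)` of a lattice `L`: the commutative monoid presented by
generators `Δ(a,b)` for `a ≤ b` in `L` and the relations (D0), (D1), (D2). -/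
def DimMonoid (L : Type*) [Lattice L] : Type _ :=
  (addConGen (DimRel L)).Quotient

instance (L : Type*) [Lattice L] : AddCommMonoid (DimMonoid L) :=
  inferInstanceAs (AddCommMonoid (addConGen (DimRel L)).Quotient)

/-- The dimension map `Δ : L × L → D(L)`. -/
def dimDelta {L : Type*} [Lattice L] (a b : L) : DimMonoid L :=
  AddCon.mk' (addConGen (DimRel L)) {(a, b)}

lemma dimRel_eq {L : Type*} [Lattice L] {x y : Multiset (L × L)} (h : DimRel L x y) :
    AddCon.mk' (addConGen (DimRel L)) x = AddCon.mk' (addConGen (DimRel L)) y :=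
  (AddCon.eq _).mpr (AddConGen.Rel.of _ _ h)

lemma dimDelta_d1 {L : Type*} [Lattice L] {a b c : L} (h1 : a ≤ b) (h2 : b ≤ c) :
    dimDelta a c = dimDelta a b + dimDelta b c := by
  exact (dimRel_eq (DimRel.d1 a b c h1 h2)).trans (map_add _ _ _)

lemma dimDelta_d2 {L : Type*} [Lattice L] (a b : L) :
    dimDelta a (a ⊔ b) = dimDelta (a ⊓ b) b :=
  dimRel_eq (DimRel.d2 a b)

theorem stmt15 (L : Type*) [Lattice L] [IsModularLattice L]
    (a b c : L) (hba : b ≤ a) :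
    dimDelta b a = dimDelta (b ⊓ c) (a ⊓ c) + dimDelta (b ⊔ c) (a ⊔ c) := by
  have h1 : b ≤ b ⊔ (a ⊓ c) := le_sup_left
  have h2 : b ⊔ (a ⊓ c) ≤ a := sup_le hba inf_le_left
  rw [dimDelta_d1 h1 h2]
  congr 1
  · have := dimDelta_d2 b (a ⊓ c)
    rwa [show b ⊓ (a ⊓ c) = b ⊓ c by rw [← inf_assoc, inf_eq_left.mpr hba]] at this
  · have := dimDelta_d2 (b ⊔ c) a
    rw [show (b ⊔ c) ⊔ a = a ⊔ c by
          rw [sup_comm b c, sup_assoc, sup_eq_right.mpr hba, sup_comm],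
        show (b ⊔ c) ⊓ a = b ⊔ (a ⊓ c) by
          rw [sup_inf_assoc_of_le c hba, inf_comm]] at this
    exact this.symm
end

section
/- Let L be a relatively complemented lattice and let a, b ∈ L. Then the following are equivalent: (a) a is subperspective to b (there exists x with a ∧ x ≤ b ∧ x and a ∨ x ≤ b ∨ x); (b) there exists y ≤ b with a ∼ y; (c) there exists x ≥ a with x ∼ b. -/
/-!
If `a ⊓ x ≤ b ⊓ x` and `a ⊔ x ≤ b ⊔ x`, a relative complement `c` of `a ⊔ x` in `[x, b ⊔ x]`
keeps `a ⊓ c ≤ b ⊓ c` and makes the joins equal, `a ⊔ c = b ⊔ c`. A relative complement `y`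
of `b ⊓ c` in `[a ⊓ c, b]` then lies below `b` and is perspective to `a` via `c`. The third
condition is the second one read in the order dual, where subperspectivity reverses direction.
-/

open OrderDual

def IsRelComplemented (L : Type*) [Lattice L] : Prop :=
  ∀ u v a : L, u ≤ a → a ≤ v → ∃ x, a ⊓ x = u ∧ a ⊔ x = v

section

variable {L : Type*} [Lattice L]

def Perspective (a b : L) : Prop :=
  ∃ c, a ⊓ c = b ⊓ c ∧ a ⊔ c = b ⊔ c

def Subperspective (a b : L) : Prop :=
  ∃ x, a ⊓ x ≤ b ⊓ x ∧ a ⊔ x ≤ b ⊔ x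

theorem IsRelComplemented.dual (h : IsRelComplemented L) : IsRelComplemented Lᵒᵈ :=
  fun u v a hu hv ↦
    let ⟨x, hinf, hsup⟩ := h (ofDual v) (ofDual u) (ofDual a) hv hu
    ⟨toDual x, hsup, hinf⟩

theorem Perspective.symm {a b : L} (h : Perspective a b) : Perspective b a :=
  let ⟨c, hinf, hsup⟩ := h
  ⟨c, hinf.symm, hsup.symm⟩

theorem perspective_toDual {a b : L} : Perspective (toDual a) (toDual b) ↔ Perspective a b :=
  ⟨fun ⟨c, hinf, hsup⟩ ↦ ⟨ofDual c, hsup, hinf⟩, fun ⟨c, hinf, hsup⟩ ↦ ⟨toDual c, hsup, hinf⟩⟩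

theorem subperspective_toDual {a b : L} :
    Subperspective (toDual b) (toDual a) ↔ Subperspective a b :=
  ⟨fun ⟨x, hinf, hsup⟩ ↦ ⟨ofDual x, hsup, hinf⟩, fun ⟨x, hinf, hsup⟩ ↦ ⟨toDual x, hsup, hinf⟩⟩

theorem Perspective.subperspective_of_le {a y b : L} (h : Perspective a y) (hyb : y ≤ b) :
    Subperspective a b :=
  let ⟨c, hinf, hsup⟩ := h
  ⟨c, hinf.le.trans (inf_le_inf_right c hyb), hsup.le.trans (sup_le_sup_right hyb c)⟩

theorem Perspective.subperspective_of_ge {a x b : L} (h : Perspective x b) (hax : a ≤ x) :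
    Subperspective a b :=
  let ⟨c, hinf, hsup⟩ := h
  ⟨c, hinf ▸ inf_le_inf_right c hax, hsup ▸ sup_le_sup_right hax c⟩

section IsRelComplemented

variable (hrc : IsRelComplemented L)
include hrc

theorem Subperspective.exists_sup_eq {a b : L} (h : Subperspective a b) :
    ∃ c, a ⊓ c ≤ b ⊓ c ∧ a ⊔ c = b ⊔ c := by
  obtain ⟨x, hinf, hsup⟩ := h
  obtain ⟨c, hc_inf, hc_sup⟩ := hrc x (b ⊔ x) (a ⊔ x) le_sup_right hsup
  have hxc : x ≤ c := hc_inf ▸ inf_le_right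
  have hcbx : c ≤ b ⊔ x := hc_sup ▸ le_sup_right
  refine ⟨c, ?_, ?_⟩
  · calc a ⊓ c ≤ a ⊓ x := le_inf inf_le_left (hc_inf ▸ inf_le_inf_right c le_sup_left)
      _ ≤ b ⊓ x := hinf
      _ ≤ b ⊓ c := inf_le_inf_left b hxc
  · calc a ⊔ c = a ⊔ x ⊔ c := by rw [sup_assoc, sup_eq_right.2 hxc]
      _ = b ⊔ x := hc_sup
      _ = b ⊔ c := le_antisymm (sup_le_sup_left hxc b) (sup_le le_sup_left hcbx)

theorem exists_le_perspective_of_sup_eq {a b c : L} (hinf : a ⊓ c ≤ b ⊓ c)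
    (hsup : a ⊔ c = b ⊔ c) : ∃ y, y ≤ b ∧ Perspective a y := by
  obtain ⟨y, hy_inf, hy_sup⟩ := hrc (a ⊓ c) b (b ⊓ c) hinf inf_le_left
  have hyb : y ≤ b := hy_sup ▸ le_sup_right
  refine ⟨y, hyb, c, ?_, ?_⟩
  · rw [← hy_inf, inf_right_comm, inf_eq_right.2 hyb]
  · rw [hsup, ← hy_sup, sup_right_comm, sup_eq_right.2 (inf_le_right : b ⊓ c ≤ c), sup_comm]

theorem Subperspective.exists_le_perspective {a b : L} (h : Subperspective a b) :
    ∃ y, y ≤ b ∧ Perspective a y :=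
  let ⟨_, hinf, hsup⟩ := h.exists_sup_eq hrc
  exists_le_perspective_of_sup_eq hrc hinf hsup

theorem Subperspective.exists_ge_perspective {a b : L} (h : Subperspective a b) :
    ∃ x, a ≤ x ∧ Perspective x b :=
  let ⟨y, hya, hp⟩ := (subperspective_toDual.2 h).exists_le_perspective hrc.dual
  ⟨ofDual y, hya, (perspective_toDual.1 hp).symm⟩

end IsRelComplemented

end

theorem stmt19 (L : Type*) [Lattice L]
    (hrc : ∀ u v a : L, u ≤ a → a ≤ v → ∃ x : L, a ⊓ x = u ∧ a ⊔ x = v)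
    (a b : L) :
    ((∃ x : L, a ⊓ x ≤ b ⊓ x ∧ a ⊔ x ≤ b ⊔ x) ↔
        (∃ y : L, y ≤ b ∧ ∃ c : L, a ⊓ c = y ⊓ c ∧ a ⊔ c = y ⊔ c)) ∧
      ((∃ x : L, a ⊓ x ≤ b ⊓ x ∧ a ⊔ x ≤ b ⊔ x) ↔
        (∃ x : L, a ≤ x ∧ ∃ c : L, x ⊓ c = b ⊓ c ∧ x ⊔ c = b ⊔ c)) :=
  ⟨⟨Subperspective.exists_le_perspective hrc,
      fun ⟨_, hyb, hp⟩ ↦ Perspective.subperspective_of_le hp hyb⟩,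
    ⟨Subperspective.exists_ge_perspective hrc,
      fun ⟨_, hax, hp⟩ ↦ Perspective.subperspective_of_ge hp hax⟩⟩
end
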